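/- arXiv:2006.01025 — 3 statements merged into one kernel-verified Lean document; each statement's English description precedes it below -/
import Mathlib

section
/- For 0 < M/N < 1 and K ≥ 1, the decentralized rate exceeds the centralized rate: K(1-M/N)·(N/(KM))·(1-(1-M/N)^K) ≥ K(1-M/N)/(1+KM/N). -/
/-!
Write `x = M / N`. After cancelling the common factor `1 - x`, the claim becomes
`(1 + K x) (1 - x)^K ≤ 1`, which follows from Bernoulli's inequality `1 + K x ≤ (1 + x)^K`
and `(1 + x)^K (1 - x)^K = (1 - x^2)^K ≤ 1`.
-/

theorem one_add_mul_mul_one_sub_pow_le_one {x : ℝ} (hx₀ : -1 ≤ x) (hx₁ : x ≤ 1) (n : ℕ) :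
    (1 + n * x) * (1 - x) ^ n ≤ 1 :=
  calc (1 + n * x) * (1 - x) ^ n ≤ (1 + x) ^ n * (1 - x) ^ n :=
        mul_le_mul_of_nonneg_right (one_add_mul_le_pow (by linarith) n) (pow_nonneg (by linarith) n)
    _ = (1 - x ^ 2) ^ n := by rw [← mul_pow]; ring
    _ ≤ 1 := pow_le_one₀ (by nlinarith) (by nlinarith)

theorem div_one_add_mul_le_one_sub_one_sub_pow_div {x : ℝ} (hx₀ : 0 < x) (hx₁ : x ≤ 1) (n : ℕ) :
    n / (1 + n * x) ≤ (1 - (1 - x) ^ n) / x := by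
  have key := one_add_mul_mul_one_sub_pow_le_one (by linarith) hx₁ n
  rw [div_le_div_iff₀ (by positivity) hx₀]
  nlinarith

theorem decentralized_ge_centralized_general (M N : ℝ) (K : ℕ) (h1 : 0 < M / N)
    (h2 : M / N < 1) :
    (K : ℝ) * (1 - M / N) / (1 + K * M / N)
      ≤ (K : ℝ) * (1 - M / N) * (N / (K * M) * (1 - (1 - M / N) ^ K)) := by
  rcases K.eq_zero_or_pos with rfl | hK
  · simp
  have hM : M ≠ 0 := by rintro rfl; simp at h1
  have hN : N ≠ 0 := by rintro rfl; simp at h1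
  have hlhs : (K : ℝ) * (1 - M / N) / (1 + K * M / N)
      = (1 - M / N) * (K / (1 + K * (M / N))) := by
    ring
  have hrhs : (K : ℝ) * (1 - M / N) * (N / (K * M) * (1 - (1 - M / N) ^ K))
      = (1 - M / N) * ((1 - (1 - M / N) ^ K) / (M / N)) := by
    field_simp
  rw [hlhs, hrhs]
  exact mul_le_mul_of_nonneg_left
    (div_one_add_mul_le_one_sub_one_sub_pow_div h1 h2.le K) (by linarith)

/-- The decentralized coded caching rate is at least the centralized rate:
`K(1-M/N)(N/(KM))(1-(1-M/N)^K) ≥ K(1-M/N)/(1+KM/N)`. -/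
theorem decentralized_ge_centralized (M N : ℝ) (K : ℕ) (h1 : 0 < M / N)
    (h2 : M / N < 1) (hK : 1 ≤ K) :
    (K : ℝ) * (1 - M / N) / (1 + K * M / N)
      ≤ (K : ℝ) * (1 - M / N) * (N / (K * M) * (1 - (1 - M / N) ^ K)) :=
  decentralized_ge_centralized_general M N K h1 h2
end

section
/- In the two-user, two-file example with M = 1: if each of files A and B (each F bits) is split into halves A1,A2 and B1,B2, cache 1 stores (A1,B1) and cache 2 stores (A2,B2), then for any pair of requests (d1,d2) ∈ {A,B}², a single broadcast of F/2 bits suffices for both users to recover their requested files, where the broadcast is the XOR of the subfile of d1 stored in cache 2 with the subfile of d2 stored in cache 1. -/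
/-!
A user's cache holds, for each file, the half that file contributes at that user's position, so
it can look up directly one half of its own request and the half of the other request that is
mixed into the broadcast. Subtracting the latter from the broadcast yields the missing half.
-/

def cacheLookup {α : Type*} (d : Bool) (c : α × α) : α :=
  if d then c.1 else c.2

theorem cacheLookup_map {α β : Type*} (f : α → β) (d : Bool) (A B : α) :
    cacheLookup d (f A, f B) = f (if d then A else B) := by
  cases d <;> rfl

theorem two_user_two_file_example_general (V : Type*) [AddCommGroup V] :
    ∃ g₁ g₂ : Bool → Bool → (V × V) → V → (V × V),
      ∀ (A B : V × V) (d₁ d₂ : Bool),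
        g₁ d₁ d₂ (A.1, B.1)
            ((if d₁ then A else B).2 + (if d₂ then A else B).1)
          = (if d₁ then A else B)
        ∧ g₂ d₁ d₂ (A.2, B.2)
            ((if d₁ then A else B).2 + (if d₂ then A else B).1)
          = (if d₂ then A else B) := by
  refine ⟨fun d₁ d₂ c x => (cacheLookup d₁ c, x - cacheLookup d₂ c),
    fun d₁ d₂ c x => (x - cacheLookup d₁ c, cacheLookup d₂ c), fun A B d₁ d₂ => ?_⟩
  simp only [cacheLookup_map Prod.fst, cacheLookup_map Prod.snd]
  exact ⟨Prod.ext rfl (add_sub_cancel_right _ _), Prod.ext (add_sub_cancel_left _ _) rfl⟩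

/-- Two-user, two-file coded caching example with `M = 1`.  Files `A` and `B`
are pairs of half-files (elements of a `GF(2)` vector space).  Cache 1 stores
`(A₁, B₁)` and cache 2 stores `(A₂, B₂)`.  For any requests `(d₁, d₂)`, the
single broadcast consisting of the XOR of the subfile of `d₁` stored in cache 2
with the subfile of `d₂` stored in cache 1 lets each user recover its requested
file from its own cache and the broadcast. -/
theorem two_user_two_file_example (V : Type*) [AddCommGroup V] [Module (ZMod 2) V] :
    ∃ g₁ g₂ : Bool → Bool → (V × V) → V → (V × V),
      ∀ (A B : V × V) (d₁ d₂ : Bool),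
        g₁ d₁ d₂ (A.1, B.1)
            ((if d₁ then A else B).2 + (if d₂ then A else B).1)
          = (if d₁ then A else B)
        ∧ g₂ d₁ d₂ (A.2, B.2)
            ((if d₁ then A else B).2 + (if d₂ then A else B).1)
          = (if d₂ then A else B) :=
  two_user_two_file_example_general V
end

section
/- In the Maddah-Ali–Niesen delivery scheme, for any user i and any t-subset T of {1,...,K}\{i}, user i can recover subfile W_{d_i}^T from the broadcast message corresponding to S = T ∪ {i} together with its cache contents, because every other subfile W_{d_j}^{S\{j}} appearing in the XOR (for j ∈ S, j ≠ i) satisfies i ∈ S\{j} and is therefore stored in cache i. -/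
theorem man_decodability_general (V : Type*) [AddCommGroup V]
    (K N : ℕ) (d : Fin K → Fin N) (W : Fin N → Finset (Fin K) → V)
    (i : Fin K) (T : Finset (Fin K)) (hiT : i ∉ T) :
    (∀ j ∈ T, i ∈ insert i T \ {j})
    ∧ W (d i) T
        = (∑ j ∈ insert i T, W (d j) (insert i T \ {j}))
          - ∑ j ∈ T, W (d j) (insert i T \ {j}) := by
  refine ⟨fun j hjT => Finset.mem_sdiff.2 ⟨Finset.mem_insert_self i T, ?_⟩, ?_⟩
  · exact Finset.mem_singleton.not.2 fun hij => hiT (hij ▸ hjT)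
  · rw [Finset.sum_insert hiT, Finset.sdiff_singleton_eq_erase, Finset.erase_insert hiT,
      add_sub_cancel_right]

/-- Decodability of the Maddah-Ali–Niesen delivery scheme: for user `i` and any
`t`-subset `T` of the other users, every subfile `W_{d_j}^{S\{j}}`, `j ∈ T`,
appearing in the broadcast for `S = T ∪ {i}` has `i ∈ S\{j}` (hence is stored
in cache `i`), and user `i` recovers `W_{d_i}^T` by subtracting (XOR-ing) those
subfiles from the broadcast message `⊕_{j∈S} W_{d_j}^{S\{j}}`. -/
theorem man_decodability (V : Type*) [AddCommGroup V] [Module (ZMod 2) V]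
    (K N t : ℕ) (d : Fin K → Fin N) (W : Fin N → Finset (Fin K) → V)
    (i : Fin K) (T : Finset (Fin K)) (hT : T.card = t) (hiT : i ∉ T) :
    (∀ j ∈ T, i ∈ insert i T \ {j})
    ∧ W (d i) T
        = (∑ j ∈ insert i T, W (d j) (insert i T \ {j}))
          - ∑ j ∈ T, W (d j) (insert i T \ {j}) :=
  man_decodability_general V K N d W i T hiT
end
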